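/- Let X be a nonsingular BV algebra and let ξ be an infinitesimal canonical map of X. Then ξ is a derivation of the BV bracket: ξ((f,g)_X) = (ξf, g)_X + (f, ξg)_X for all f, g ∈ X. -/

import Mathlib

/-!
Common setup: real unital ℤ-graded (graded-)commutative algebras, BV Laplacians,
BV brackets, BV algebra structures, canonical maps and master actions.
-/

/-- Graded commutativity with Koszul signs: `f * g = (-1)^{|f||g|} g * f`
for homogeneous `f`, `g`. -/
def GradedComm {X : Type*} [Ring X] [Algebra ℝ X] (𝒜 : ℤ → Submodule ℝ X) : Prop :=
  ∀ (i j : ℤ) (f g : X), f ∈ 𝒜 i → g ∈ 𝒜 j → f * g = ((-1 : ℝ) ^ (i * j)) • (g * f)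

/-- `D` is a BV Laplacian on the ℤ-graded algebra `X` with grading `𝒜`:
it raises degree by `1`, is a second-order differential operator
(seven-term identity on homogeneous elements), squares to zero and kills `1`. -/
def IsBVLaplacian {X : Type*} [Ring X] [Algebra ℝ X]
    (𝒜 : ℤ → Submodule ℝ X) (D : X →ₗ[ℝ] X) : Prop :=
  (∀ (i : ℤ) (f : X), f ∈ 𝒜 i → D f ∈ 𝒜 (i + 1)) ∧
  (∀ (i j k : ℤ) (f g h : X), f ∈ 𝒜 i → g ∈ 𝒜 j → h ∈ 𝒜 k →
    D (f * g * h) =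
      -(D f * g * h) - ((-1 : ℝ) ^ i) • (f * D g * h)
        - ((-1 : ℝ) ^ (i + j)) • (f * g * D h)
        + D (f * g) * h + ((-1 : ℝ) ^ ((i + 1) * j)) • (g * D (f * h))
        + ((-1 : ℝ) ^ i) • (f * D (g * h))) ∧
  (∀ f : X, D (D f) = 0) ∧
  D 1 = 0

/-- `Br` is the BV bracket associated with the Laplacian `D`: it is the bilinear
map given on homogeneous `f`, `g` by
`(f,g) = (-1)^{|f|} (D(fg) - (Df)g - (-1)^{|f|} f(Dg))`. -/
def IsBVBracketOf {X : Type*} [Ring X] [Algebra ℝ X]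
    (𝒜 : ℤ → Submodule ℝ X) (D : X →ₗ[ℝ] X) (Br : X →ₗ[ℝ] X →ₗ[ℝ] X) : Prop :=
  ∀ (i j : ℤ) (f g : X), f ∈ 𝒜 i → g ∈ 𝒜 j →
    Br f g = ((-1 : ℝ) ^ i) • (D (f * g) - D f * g - ((-1 : ℝ) ^ i) • (f * D g))

/-- A BV algebra structure on the ℤ-graded algebra `X` with grading `𝒜`:
graded commutativity, a BV Laplacian `Δ` and its associated BV bracket. -/
structure BVAlgebraStr (X : Type*) [Ring X] [Algebra ℝ X]
    (𝒜 : ℤ → Submodule ℝ X) where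
  grcomm : GradedComm 𝒜
  Δ : X →ₗ[ℝ] X
  isBVLaplacian : IsBVLaplacian 𝒜 Δ
  bracket : X →ₗ[ℝ] X →ₗ[ℝ] X
  isBracket : IsBVBracketOf 𝒜 Δ bracket

/-- The bracket `Br` is nonsingular: its center is exactly `ℝ·1`. -/
def IsNonsingularBracket {X : Type*} [Ring X] [Algebra ℝ X]
    (Br : X →ₗ[ℝ] X →ₗ[ℝ] X) : Prop :=
  ∀ c : X, (∀ f : X, Br f c = 0) ↔ ∃ r : ℝ, c = algebraMap ℝ X r

/-- `α` is a canonical map with logarithmic Jacobian `r`: a degree-preserving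
isomorphism of unital algebras with `Δ_Y(αf) - α(Δ_X f) + (r, αf)_Y = 0`,
where `r` has degree `0`. -/
def IsCanonicalWithJacobian {X Y : Type*} [Ring X] [Algebra ℝ X] [Ring Y] [Algebra ℝ Y]
    (𝒜 : ℤ → Submodule ℝ X) (ℬ : ℤ → Submodule ℝ Y)
    (ΔX : X →ₗ[ℝ] X) (ΔY : Y →ₗ[ℝ] Y) (BrY : Y →ₗ[ℝ] Y →ₗ[ℝ] Y)
    (α : X ≃ₐ[ℝ] Y) (r : Y) : Prop :=
  (∀ (i : ℤ) (f : X), f ∈ 𝒜 i → α f ∈ ℬ i) ∧ r ∈ ℬ 0 ∧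
  (∀ f : X, ΔY (α f) - α (ΔX f) + BrY r (α f) = 0)

/-- `ξ` is an infinitesimal canonical map with logarithmic Jacobian `e`:
a degree-`0` derivation with `Δ(ξf) - ξ(Δf) + (e, f) = 0`, `e` of degree `0`. -/
def IsInfCanonicalWithJacobian {X : Type*} [Ring X] [Algebra ℝ X]
    {𝒜 : ℤ → Submodule ℝ X} (B : BVAlgebraStr X 𝒜)
    (ξ : X →ₗ[ℝ] X) (e : X) : Prop :=
  (∀ (i : ℤ) (f : X), f ∈ 𝒜 i → ξ f ∈ 𝒜 i) ∧
  (∀ f g : X, ξ (f * g) = ξ f * g + f * ξ g) ∧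
  e ∈ 𝒜 0 ∧
  (∀ f : X, B.Δ (ξ f) - ξ (B.Δ f) + B.bracket e f = 0)

/-- `S` is a BV quantum master action: a degree-`0` element satisfying the
quantum master equation `ΔS + (1/2)(S,S) = 0`. -/
def IsMasterAction {X : Type*} [Ring X] [Algebra ℝ X]
    {𝒜 : ℤ → Submodule ℝ X} (B : BVAlgebraStr X 𝒜) (S : X) : Prop :=
  S ∈ 𝒜 0 ∧ B.Δ S + (1 / 2 : ℝ) • B.bracket S S = 0

/-!
On homogeneous elements, expand `(f,g)` through the defining formula of the bracket, apply the
derivation `ξ`, and trade `ξ ∘ Δ` for `Δ ∘ ξ + (e, ·)`. The correction terms coming from the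
logarithmic Jacobian are `(e, fg)`, `(e, f)g` and `f(e, g)`; they cancel because the bracket with
the degree-`0` element `e` is a derivation of the product, by the seven-term identity. Both sides
being bilinear, the homogeneous case suffices.
-/

lemma neg_one_zpow_mul_self (i : ℤ) : (-1 : ℝ) ^ i * (-1 : ℝ) ^ i = 1 := by
  rw [← mul_zpow, neg_one_mul, neg_neg, one_zpow]

lemma DirectSum.decompose_lhom_ext₂ {R ι M N : Type*} [CommSemiring R] [DecidableEq ι]
    [AddCommMonoid M] [Module R M] [AddCommMonoid N] [Module R N]
    (ℳ : ι → Submodule R M) [DirectSum.Decomposition ℳ] ⦃Φ Ψ : M →ₗ[R] M →ₗ[R] N⦄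
    (h : ∀ (i j : ι) (f g : M), f ∈ ℳ i → g ∈ ℳ j → Φ f g = Ψ f g) : Φ = Ψ :=
  DirectSum.decompose_lhom_ext ℳ fun i => LinearMap.ext fun f =>
    DirectSum.decompose_lhom_ext ℳ fun j => LinearMap.ext fun g => h i j f g f.2 g.2

namespace BVAlgebraStr

variable {X : Type*} [Ring X] [Algebra ℝ X] {𝒜 : ℤ → Submodule ℝ X} (B : BVAlgebraStr X 𝒜)

lemma bracket_mul_of_mem_zero [SetLike.GradedMonoid 𝒜] {e : X} (he : e ∈ 𝒜 0) {i j : ℤ}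
    {f g : X} (hf : f ∈ 𝒜 i) (hg : g ∈ 𝒜 j) :
    B.bracket e (f * g) = B.bracket e f * g + ((-1 : ℝ) ^ i) • (f * B.bracket e g) := by
  obtain ⟨hdeg, hseven, -, -⟩ := B.isBVLaplacian
  have hDe : B.Δ e ∈ 𝒜 1 := by simpa using hdeg 0 e he
  have hcomm_Δe : f * B.Δ e = ((-1 : ℝ) ^ i) • (B.Δ e * f) := by
    simpa using B.grcomm i 1 f (B.Δ e) hf hDe
  have hcomm_e : f * e = e * f := by simpa using B.grcomm i 0 f e hf he
  have hΔefg := hseven 0 i j e f g he hf hg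
  simp only [zero_add, one_mul, zpow_zero, one_smul] at hΔefg
  rw [B.isBracket 0 (i + j) e (f * g) he (SetLike.mul_mem_graded hf hg),
    B.isBracket 0 i e f he hf, B.isBracket 0 j e g he hg]
  simp only [zpow_zero, one_smul]
  rw [← mul_assoc, hΔefg]
  simp only [mul_sub, sub_mul, smul_sub, ← mul_assoc, hcomm_Δe, hcomm_e, smul_mul_assoc,
    smul_smul, neg_one_zpow_mul_self, one_smul]
  module

end BVAlgebraStr

namespace IsInfCanonicalWithJacobian

variable {X : Type*} [Ring X] [Algebra ℝ X] {𝒜 : ℤ → Submodule ℝ X} {B : BVAlgebraStr X 𝒜}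
  {ξ : X →ₗ[ℝ] X} {e : X}

lemma map_Δ (h : IsInfCanonicalWithJacobian B ξ e) (f : X) :
    ξ (B.Δ f) = B.Δ (ξ f) + B.bracket e f := by
  rw [eq_comm, ← sub_eq_zero, ← h.2.2.2 f]
  abel

lemma map_bracket_of_mem [SetLike.GradedMonoid 𝒜] (h : IsInfCanonicalWithJacobian B ξ e)
    {i j : ℤ} {f g : X} (hf : f ∈ 𝒜 i) (hg : g ∈ 𝒜 j) :
    ξ (B.bracket f g) = B.bracket (ξ f) g + B.bracket f (ξ g) := by
  obtain ⟨hξdeg, hξmul, he, -⟩ := id h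
  rw [B.isBracket i j f g hf hg, B.isBracket i j (ξ f) g (hξdeg i f hf) hg,
    B.isBracket i j f (ξ g) hf (hξdeg j g hg)]
  simp only [map_smul, map_sub, hξmul, h.map_Δ, map_add,
    B.bracket_mul_of_mem_zero he hf hg, add_mul, mul_add]
  module

end IsInfCanonicalWithJacobian

theorem stmt7_general {X : Type*} [Ring X] [Algebra ℝ X]
    (𝒜 : ℤ → Submodule ℝ X) [GradedAlgebra 𝒜] (B : BVAlgebraStr X 𝒜)
    (ξ : X →ₗ[ℝ] X) (e : X) (h : IsInfCanonicalWithJacobian B ξ e) :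
    ∀ f g : X, ξ (B.bracket f g) = B.bracket (ξ f) g + B.bracket f (ξ g) := by
  have hbilin : B.bracket.compr₂ ξ = B.bracket ∘ₗ ξ + B.bracket.compl₂ ξ :=
    DirectSum.decompose_lhom_ext₂ 𝒜 fun _ _ _ _ hf hg => h.map_bracket_of_mem hf hg
  exact fun f g => LinearMap.congr_fun₂ hbilin f g

/-- infinitesimal canonical maps are derivations of the BV bracket. -/
theorem stmt7 {X : Type*} [Ring X] [Algebra ℝ X]
    (𝒜 : ℤ → Submodule ℝ X) [GradedAlgebra 𝒜] (B : BVAlgebraStr X 𝒜)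
    (hX : IsNonsingularBracket B.bracket)
    (ξ : X →ₗ[ℝ] X) (e : X) (h : IsInfCanonicalWithJacobian B ξ e) :
    ∀ f g : X, ξ (B.bracket f g) = B.bracket (ξ f) g + B.bracket f (ξ g) :=
  stmt7_general 𝒜 B ξ e h
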